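/- Under the stated spirallike-starlike subordination hypothesis with p₁ ≠ 0, writing ϑ₂ = [2]_q − 1 and ϑ₃ = [3]_q − 1, for every complex number μ one has the Fekete–Szegő bound |a₃ − μ·a₂²| ≤ (10·|b|·|p₁|/(|ϱ|·ϑ₃)) · max{ 1, | p₂/p₁ + b·p₁·(10·ϑ₂ − 9·μ·ϑ₃)/(10·ϱ·ϑ₂²) | }. -/

import Mathlib

/-!
Write `F = ∑ Aₙ zⁿ`, so that `a₂ = -3 A₂` and `a₃ = 10 A₃`, and let `cₖ` be the Taylor coefficients
of `w`. Since `z D_qF(z) = (F(z) - F(qz)) / (1 - q)`, the subordination reads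
`ϱ (F(z) - F(qz)) / (1 - q) = F(z) (ϱ - b + b p(w(z)))`. Comparing the coefficients of `z²` and `z³`
gives `ϱ ϑ₂ A₂ = b p₁ c₁` and `ϱ ϑ₃ A₃ = A₂ b p₁ c₁ + b (p₂ c₁² + p₁ c₂)`. Eliminating `A₂`, `A₃`
turns `a₃ - μ a₂²` into `(10 b p₁ / (ϱ ϑ₃)) (c₂ + T c₁²)`, with `T` the expression inside the
maximum, and the Schwarz–Pick inequality `‖c₂‖ ≤ 1 - ‖c₁‖²` bounds `‖c₂ + T c₁²‖` by `max 1 ‖T‖`.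
-/

open Metric Filter Complex ComplexConjugate Topology Finset Set

noncomputable def taylorCoeff (f : ℂ → ℂ) (n : ℕ) : ℂ := iteratedDeriv n f 0 / n.factorial

@[simp] theorem taylorCoeff_zero (f : ℂ → ℂ) : taylorCoeff f 0 = f 0 := by simp [taylorCoeff]

theorem taylorCoeff_one (f : ℂ → ℂ) : taylorCoeff f 1 = deriv f 0 := by simp [taylorCoeff]

theorem taylorCoeff_id (n : ℕ) : taylorCoeff id n = if n = 1 then 1 else 0 := by
  rcases n with _ | _ | n <;> simp [taylorCoeff, iteratedDeriv_id]

theorem taylorCoeff_const_add_mul (a b : ℂ) (h : ℂ → ℂ) {n : ℕ} (hn : 0 < n) :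
    taylorCoeff (fun z ↦ a + b * h z) n = b * taylorCoeff h n := by
  rw [taylorCoeff, iteratedDeriv_const_add hn, iteratedDeriv_const_mul_field, taylorCoeff,
    mul_div_assoc]

theorem taylorCoeff_mul {f g : ℂ → ℂ} {n : ℕ} (hf : ContDiffAt ℂ n f 0) (hg : ContDiffAt ℂ n g 0) :
    taylorCoeff (f * g) n = ∑ i ∈ range (n + 1), taylorCoeff f i * taylorCoeff g (n - i) := by
  rw [taylorCoeff, iteratedDeriv_mul hf hg, sum_div]
  refine sum_congr rfl fun i hi ↦ ?_
  rw [Nat.cast_choose ℂ (mem_range_succ_iff.mp hi), taylorCoeff, taylorCoeff]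
  have := Nat.cast_ne_zero (R := ℂ) |>.mpr (Nat.factorial_ne_zero n)
  field_simp

theorem taylorCoeff_comp_one {g f : ℂ → ℂ} (hf0 : f 0 = 0) (hg : DifferentiableAt ℂ g 0)
    (hf : DifferentiableAt ℂ f 0) :
    taylorCoeff (g ∘ f) 1 = taylorCoeff g 1 * taylorCoeff f 1 := by
  rw [taylorCoeff_one, taylorCoeff_one, taylorCoeff_one, deriv_comp 0 (by rwa [hf0]) hf, hf0]

theorem taylorCoeff_comp_two {g f : ℂ → ℂ} (hf0 : f 0 = 0) (hg : ContDiffAt ℂ 2 g 0)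
    (hf : ContDiffAt ℂ 2 f 0) :
    taylorCoeff (g ∘ f) 2 =
      taylorCoeff g 2 * taylorCoeff f 1 ^ 2 + taylorCoeff g 1 * taylorCoeff f 2 := by
  simp only [taylorCoeff, iteratedDeriv_comp_two (hf0 ▸ hg) hf, hf0, iteratedDeriv_one]
  norm_num
  ring

theorem hasFPowerSeriesOnBall_ofScalars_of_hasSum {c : ℕ → ℂ} {g : ℂ → ℂ} {r : ℝ} (hr : 0 < r)
    (h : ∀ z ∈ ball (0 : ℂ) r, HasSum (fun n ↦ c n * z ^ n) (g z)) :
    HasFPowerSeriesOnBall g (FormalMultilinearSeries.ofScalars ℂ c) 0 (ENNReal.ofReal r) where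
  r_le := by
    refine ENNReal.le_of_forall_nnreal_lt fun s hs ↦ ?_
    have hs : (s : ℝ) < r := by simpa [ENNReal.coe_lt_ofReal] using hs
    refine FormalMultilinearSeries.le_radius_of_summable_norm _ ?_
    have := (h s (by simpa using hs)).summable.norm
    simpa [FormalMultilinearSeries.ofScalars_norm] using this
  r_pos := by simpa using hr
  hasSum {y} hy := by
    have hy : y ∈ ball (0 : ℂ) r := by simpa [edist_dist, ENNReal.ofReal_lt_ofReal_iff hr] using hy
    simpa [FormalMultilinearSeries.ofScalars_apply_eq, mul_comm] using h y hy

theorem taylorCoeff_eq_of_hasSum {c : ℕ → ℂ} {g : ℂ → ℂ} {r : ℝ} (hr : 0 < r)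
    (h : ∀ z ∈ ball (0 : ℂ) r, HasSum (fun n ↦ c n * z ^ n) (g z)) (n : ℕ) :
    taylorCoeff g n = c n := by
  have := (hasFPowerSeriesOnBall_ofScalars_of_hasSum hr h).factorial_smul 1 n
  rw [taylorCoeff, iteratedDeriv_eq_iteratedFDeriv, ← this]
  simp [Nat.factorial_ne_zero]

theorem hasSum_sub_comp_const_mul {A : ℕ → ℂ} {F : ℂ → ℂ} {r : ℝ} {c : ℂ} (hc : ‖c‖ ≤ 1)
    (hF : ∀ z ∈ ball (0 : ℂ) r, HasSum (fun n ↦ A n * z ^ n) (F z)) :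
    ∀ z ∈ ball (0 : ℂ) r, HasSum (fun n ↦ (1 - c ^ n) * A n * z ^ n) (F z - F (c * z)) := by
  intro z hz
  have hcz : c * z ∈ ball (0 : ℂ) r := by
    rw [mem_ball_zero_iff] at hz ⊢
    rw [norm_mul]
    exact (mul_le_of_le_one_left (norm_nonneg z) hc).trans_lt hz
  exact ((hF z hz).sub (hF _ hcz)).congr_fun fun n ↦ by ring

theorem coeff_eq_sum_of_mul_eventuallyEq {A B : ℕ → ℂ} {F G ψ : ℂ → ℂ} {r : ℝ} (hr : 0 < r)
    (hF : ∀ z ∈ ball (0 : ℂ) r, HasSum (fun n ↦ A n * z ^ n) (F z))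
    (hG : ∀ z ∈ ball (0 : ℂ) r, HasSum (fun n ↦ B n * z ^ n) (G z))
    (hψ : AnalyticAt ℂ ψ 0) (h : F * ψ =ᶠ[𝓝 0] G) (n : ℕ) :
    B n = ∑ i ∈ range (n + 1), A i * taylorCoeff ψ (n - i) := by
  have hFa := (hasFPowerSeriesOnBall_ofScalars_of_hasSum hr hF).analyticAt
  rw [← taylorCoeff_eq_of_hasSum hr hG, taylorCoeff, ← h.iteratedDeriv_eq, ← taylorCoeff,
    taylorCoeff_mul hFa.contDiffAt hψ.contDiffAt]
  simp only [taylorCoeff_eq_of_hasSum hr hF]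

theorem coeff_relations_of_mul_eq_qDiff {q ϱ b : ℂ} (hq : ‖q‖ ≤ 1) {A : ℕ → ℂ} (hA₀ : A 0 = 0)
    (hA₁ : A 1 = 1) {F h : ℂ → ℂ} {r : ℝ} (hr : 0 < r)
    (hF : ∀ z ∈ ball (0 : ℂ) r, HasSum (fun n ↦ A n * z ^ n) (F z))
    (hh : AnalyticAt ℂ h 0) (hh₀ : h 0 = 1)
    (hFh : ∀ᶠ z in 𝓝 0, F z * (ϱ - b + b * h z) = ϱ / (1 - q) * (F z - F (q * z))) :
    ϱ * ((1 - q ^ 2) / (1 - q) - 1) * A 2 = b * taylorCoeff h 1 ∧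
      ϱ * ((1 - q ^ 3) / (1 - q) - 1) * A 3 =
        A 2 * (b * taylorCoeff h 1) + b * taylorCoeff h 2 := by
  have hG := fun z hz ↦ (hasSum_sub_comp_const_mul hq hF z hz).mul_left (ϱ / (1 - q))
  simp only [← mul_assoc] at hG
  have key := coeff_eq_sum_of_mul_eventuallyEq (ψ := fun z ↦ ϱ - b + b * h z) hr hF hG
    (analyticAt_const.add (analyticAt_const.mul hh)) hFh
  have hψ := fun n (hn : 0 < n) ↦ taylorCoeff_const_add_mul (ϱ - b) b h hn
  have hψ₀ : taylorCoeff (fun z ↦ ϱ - b + b * h z) 0 = ϱ := by simp [hh₀]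
  have h₂ := key 2
  have h₃ := key 3
  simp only [sum_range_succ, sum_range_zero, Nat.reduceSub, hA₀, hA₁, hψ₀, hψ 1 one_pos,
    hψ 2 two_pos, hψ 3 three_pos] at h₂ h₃
  constructor
  · linear_combination h₂
  · linear_combination h₃

theorem coeff_relations_of_subordination {q ϱ b : ℂ} (hq : ‖q‖ ≤ 1) (hb : b ≠ 0) {A : ℕ → ℂ}
    (hA₀ : A 0 = 0) (hA₁ : A 1 = 1) {F DqF p w : ℂ → ℂ}
    (hF : ∀ z ∈ ball (0 : ℂ) 1, HasSum (fun n ↦ A n * z ^ n) (F z))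
    (hDqF : ∀ z, z ≠ 0 → DqF z = (F z - F (q * z)) / ((1 - q) * z))
    (hFne : ∀ z ∈ ball (0 : ℂ) 1, z ≠ 0 → F z ≠ 0)
    (hp : AnalyticAt ℂ p 0) (hp₀ : p 0 = 1) (hw : AnalyticAt ℂ w 0) (hw₀ : w 0 = 0)
    (hsub : ∀ z ∈ ball (0 : ℂ) 1, z ≠ 0 → 1 + 1 / b * (ϱ * (z * DqF z / F z) - ϱ) = p (w z)) :
    ϱ * ((1 - q ^ 2) / (1 - q) - 1) * A 2 = b * (taylorCoeff p 1 * taylorCoeff w 1) ∧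
      ϱ * ((1 - q ^ 3) / (1 - q) - 1) * A 3 =
        A 2 * (b * (taylorCoeff p 1 * taylorCoeff w 1)) +
          b * (taylorCoeff p 2 * taylorCoeff w 1 ^ 2 + taylorCoeff p 1 * taylorCoeff w 2) := by
  have hF₀ : F 0 = 0 := by simpa [hA₀] using taylorCoeff_eq_of_hasSum one_pos hF 0
  have hFpw : ∀ z ∈ ball (0 : ℂ) 1,
      F z * (ϱ - b + b * p (w z)) = ϱ / (1 - q) * (F z - F (q * z)) := by
    intro z hz
    rcases eq_or_ne z 0 with rfl | hz₀
    · simp [hF₀]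
    · have := hFne z hz hz₀
      rw [← hsub z hz hz₀, hDqF z hz₀]
      field_simp
      ring
  rw [← taylorCoeff_comp_one hw₀ hp.differentiableAt hw.differentiableAt,
    ← taylorCoeff_comp_two hw₀ hp.contDiffAt hw.contDiffAt]
  exact coeff_relations_of_mul_eq_qDiff hq hA₀ hA₁ one_pos hF (hp.comp_of_eq hw hw₀)
    (by simp [hw₀, hp₀]) (eventually_of_mem (ball_mem_nhds 0 one_pos) hFpw)

theorem norm_div_one_sub_conj_mul_lt_one {α ζ : ℂ} (hα : ‖α‖ < 1) (hζ : ‖ζ‖ < 1) :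
    ‖(ζ - α) / (1 - conj α * ζ)‖ < 1 := by
  have key : ‖1 - conj α * ζ‖ ^ 2 - ‖ζ - α‖ ^ 2 = (1 - ‖α‖ ^ 2) * (1 - ‖ζ‖ ^ 2) := by
    simp only [← normSq_eq_norm_sq, normSq_apply, sub_re, sub_im, mul_re, mul_im, conj_re,
      conj_im, one_re, one_im]
    ring
  have hlt : ‖ζ - α‖ < ‖1 - conj α * ζ‖ := by
    refine lt_of_pow_lt_pow_left₀ 2 (norm_nonneg _) ?_
    have := mul_pos (by nlinarith [norm_nonneg α] : 0 < 1 - ‖α‖ ^ 2)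
      (by nlinarith [norm_nonneg ζ] : 0 < 1 - ‖ζ‖ ^ 2)
    linarith
  rw [norm_div, div_lt_one ((norm_nonneg _).trans_lt hlt)]
  exact hlt

theorem norm_deriv_le_one_sub_sq_of_mapsTo_ball {v : ℂ → ℂ}
    (hd : DifferentiableOn ℂ v (ball 0 1)) (hv : MapsTo v (ball 0 1) (ball 0 1)) :
    ‖deriv v 0‖ ≤ 1 - ‖v 0‖ ^ 2 := by
  set α := v 0
  have hα : ‖α‖ < 1 := mem_ball_zero_iff.mp (hv (mem_ball_self one_pos))
  have hden : ∀ z ∈ ball (0 : ℂ) 1, 1 - conj α * v z ≠ 0 := by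
    intro z hz h
    have : ‖conj α * v z‖ < 1 := by
      rw [norm_mul, RCLike.norm_conj]
      nlinarith [norm_nonneg α, norm_nonneg (v z), mem_ball_zero_iff.mp (hv hz)]
    rw [← sub_eq_zero.mp h, norm_one] at this
    exact this.false
  -- Schwarz's lemma for `v` followed by the disc automorphism sending `α` to `0`.
  set g : ℂ → ℂ := fun z ↦ (v z - α) / (1 - conj α * v z)
  have hgd : DifferentiableOn ℂ g (ball 0 1) := fun z hz ↦
    ((hd z hz).sub_const α).div ((hd z hz).const_mul _ |>.const_sub 1) (hden z hz)
  have hg : MapsTo g (ball 0 1) (closedBall (g 0) 1) := by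
    intro z hz
    simpa [g, α] using (norm_div_one_sub_conj_mul_lt_one hα (mem_ball_zero_iff.mp (hv hz))).le
  have hv' := (hd.differentiableAt (ball_mem_nhds 0 one_pos)).hasDerivAt
  have hg' : deriv g 0 = deriv v 0 / ((1 - ‖α‖ ^ 2 : ℝ) : ℂ) := by
    have : HasDerivAt g _ 0 := (hv'.sub_const α).fun_div ((hv'.const_mul (conj α)).const_sub 1)
      (hden 0 (mem_ball_self one_pos))
    have hden0 : 1 - conj α * α ≠ 0 := hden 0 (mem_ball_self one_pos)
    rw [this.deriv, show v 0 = α from rfl, sub_self, ofReal_sub, ofReal_one, ofReal_pow,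
      ← mul_conj', mul_comm]
    field_simp
    ring
  have hpos : 0 < 1 - ‖α‖ ^ 2 := by nlinarith [norm_nonneg α]
  have := norm_deriv_le_one_of_mapsTo_ball hgd hg one_pos
  rwa [hg', norm_div, Complex.norm_real, Real.norm_of_nonneg hpos.le, div_le_one hpos] at this

theorem norm_deriv_le_one_sub_sq_of_mapsTo_closedBall {v : ℂ → ℂ}
    (hd : DifferentiableOn ℂ v (ball 0 1)) (hv : MapsTo v (ball 0 1) (closedBall 0 1)) :
    ‖deriv v 0‖ ≤ 1 - ‖v 0‖ ^ 2 := by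
  by_cases hopen : MapsTo v (ball 0 1) (ball 0 1)
  · exact norm_deriv_le_one_sub_sq_of_mapsTo_ball hd hopen
  obtain ⟨z₀, hz₀, hvz₀⟩ := not_forall₂.mp hopen
  have hnorm : ‖v z₀‖ = 1 :=
    le_antisymm (mem_closedBall_zero_iff.mp (hv hz₀)) (not_lt.mp (by simpa using hvz₀))
  have hmax : IsMaxOn (norm ∘ v) (ball 0 1) z₀ := fun z hz ↦
    (mem_closedBall_zero_iff.mp (hv hz)).trans hnorm.ge
  have hconst := Complex.eq_const_of_exists_max hd hz₀ hmax
  have h0 : (0 : ℂ) ∈ ball (0 : ℂ) 1 := mem_ball_self one_pos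
  have hderiv : deriv v 0 = 0 := by
    rw [(hconst.eventuallyEq_of_mem (isOpen_ball.mem_nhds h0)).deriv_eq]
    exact deriv_const 0 _
  rw [hderiv, hconst h0, Function.const_apply, hnorm]
  norm_num

theorem norm_taylorCoeff_two_le {w : ℂ → ℂ} (hd : DifferentiableOn ℂ w (ball 0 1)) (hw0 : w 0 = 0)
    (hw : MapsTo w (ball 0 1) (closedBall 0 1)) :
    ‖taylorCoeff w 2‖ ≤ 1 - ‖taylorCoeff w 1‖ ^ 2 := by
  have hnhds : ball (0 : ℂ) 1 ∈ 𝓝 0 := ball_mem_nhds 0 one_pos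
  -- `w z = z * v z`, so the coefficients of `w` are those of `v` shifted by one.
  set v := dslope w 0
  have hvd : DifferentiableOn ℂ v (ball 0 1) := (differentiableOn_dslope hnhds).mpr hd
  have hv : MapsTo v (ball 0 1) (closedBall 0 1) := fun z hz ↦ by
    simpa using norm_dslope_le_div_of_mapsTo_ball hd (by rwa [hw0]) hz
  have hwv : w = id * v := funext fun z ↦ by
    simpa [hw0] using (sub_smul_dslope w 0 z).symm
  have hva := hvd.analyticAt hnhds
  have h1 : taylorCoeff w 1 = v 0 := by
    rw [hwv, taylorCoeff_mul contDiffAt_id hva.contDiffAt]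
    simp [taylorCoeff_id]
  have h2 : taylorCoeff w 2 = deriv v 0 := by
    rw [hwv, taylorCoeff_mul contDiffAt_id hva.contDiffAt]
    simp [taylorCoeff_id, taylorCoeff_one]
  rw [h1, h2]
  exact norm_deriv_le_one_sub_sq_of_mapsTo_closedBall hvd hv

theorem norm_add_mul_sq_le_max {c₁ c₂ T : ℂ} (h : ‖c₂‖ ≤ 1 - ‖c₁‖ ^ 2) :
    ‖c₂ + T * c₁ ^ 2‖ ≤ max 1 ‖T‖ := by
  have hc₁ : ‖c₁‖ ^ 2 ≤ 1 := by linarith [norm_nonneg c₂]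
  calc ‖c₂ + T * c₁ ^ 2‖ ≤ ‖c₂‖ + ‖T‖ * ‖c₁‖ ^ 2 :=
        (norm_add_le _ _).trans_eq (by rw [norm_mul, norm_pow])
    _ ≤ max 1 ‖T‖ * (1 - ‖c₁‖ ^ 2) + max 1 ‖T‖ * ‖c₁‖ ^ 2 := by
        gcongr
        · exact h.trans (le_mul_of_one_le_left (by linarith) (le_max_left _ _))
        · exact le_max_right _ _
    _ = max 1 ‖T‖ := by ring

theorem fekete_szego_identity {ϱ b ϑ₂ ϑ₃ p₁ p₂ c₁ c₂ A₂ A₃ μ : ℂ} (hϱ : ϱ ≠ 0) (hϑ₂ : ϑ₂ ≠ 0)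
    (hϑ₃ : ϑ₃ ≠ 0) (hp₁ : p₁ ≠ 0) (h₂ : ϱ * ϑ₂ * A₂ = b * (p₁ * c₁))
    (h₃ : ϱ * ϑ₃ * A₃ = A₂ * (b * (p₁ * c₁)) + b * (p₂ * c₁ ^ 2 + p₁ * c₂)) :
    10 * A₃ - 9 * μ * A₂ ^ 2 = 10 * b * p₁ / (ϱ * ϑ₃) *
      (c₂ + (p₂ / p₁ + b * p₁ * (10 * ϑ₂ - 9 * μ * ϑ₃) / (10 * ϱ * ϑ₂ ^ 2)) * c₁ ^ 2) := by
  have hA₂ : A₂ = b * (p₁ * c₁) / (ϱ * ϑ₂) := by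
    rw [eq_div_iff (mul_ne_zero hϱ hϑ₂)]; linear_combination h₂
  have hA₃ : A₃ = (A₂ * (b * (p₁ * c₁)) + b * (p₂ * c₁ ^ 2 + p₁ * c₂)) / (ϱ * ϑ₃) := by
    rw [eq_div_iff (mul_ne_zero hϱ hϑ₃)]; linear_combination h₃
  rw [hA₃, hA₂]
  field_simp
  ring

theorem starlike_fekete_szego_bound_general
    (q : ℝ) (hq0 : 0 < q) (hq1 : q < 1)
    (a : ℕ → ℂ) (ha1 : a 1 = 1)
    (F DqF : ℂ → ℂ)
    (hF : ∀ z ∈ Metric.ball (0 : ℂ) 1,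
      HasSum (fun n : ℕ =>
        (-1 : ℂ) ^ (n - 1) * a n / (((2 * n - 1 : ℕ) : ℂ) * ((n - 1).factorial : ℂ)) * z ^ n)
        (F z))
    (hDqF : ∀ z : ℂ, z ≠ 0 → DqF z = (F z - F ((q : ℂ) * z)) / ((1 - (q : ℂ)) * z))
    (ϑ2 ϑ3 : ℝ)
    (hϑ2 : ϑ2 = (1 - q ^ 2) / (1 - q) - 1)
    (hϑ3 : ϑ3 = (1 - q ^ 3) / (1 - q) - 1)
    (w : ℂ → ℂ)
    (hw : AnalyticOnNhd ℂ w (Metric.ball (0 : ℂ) 1))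
    (hw0 : w 0 = 0)
    (hwb : ∀ z ∈ Metric.ball (0 : ℂ) 1, ‖w z‖ < 1)
    (β : ℝ)
    (ϱ : ℂ) (hϱ : ϱ = 1 + Complex.I * (Real.tan β : ℂ))
    (b : ℂ) (hb : b ≠ 0)
    (p : ℂ → ℂ)
    (hp : AnalyticOnNhd ℂ p (Metric.ball (0 : ℂ) 1))
    (hp0 : p 0 = 1)
    (p1 p2 : ℂ) (hp1 : p1 = deriv p 0) (hp2 : p2 = iteratedDeriv 2 p 0 / 2)
    (hFne : ∀ z ∈ Metric.ball (0 : ℂ) 1, z ≠ 0 → F z ≠ 0)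
    (hsub : ∀ z ∈ Metric.ball (0 : ℂ) 1, z ≠ 0 →
      1 + (1 / b) * (ϱ * (z * DqF z / F z) - ϱ) = p (w z))
    (hp1ne : p1 ≠ 0)
    :
    ∀ μ : ℂ, ‖a 3 - μ * (a 2) ^ 2‖ ≤
      (10 * ‖b‖ * ‖p1‖ / (‖ϱ‖ * ϑ3)) *
        max 1 (‖p2 / p1 +
          b * p1 * (10 * (ϑ2 : ℂ) - 9 * μ * (ϑ3 : ℂ)) / (10 * ϱ * (ϑ2 : ℂ) ^ 2)‖) := by
  intro μ
  have h0 : (0 : ℂ) ∈ ball (0 : ℂ) 1 := mem_ball_self one_pos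
  have hϱ0 : ϱ ≠ 0 := fun h ↦ by simpa [hϱ] using congrArg re h
  have hϑ2q : ϑ2 = q := by rw [hϑ2]; field_simp [(by linarith : (1 : ℝ) - q ≠ 0)]; ring
  have hϑ3q : ϑ3 = q + q ^ 2 := by rw [hϑ3]; field_simp [(by linarith : (1 : ℝ) - q ≠ 0)]; ring
  have hϑ3pos : 0 < ϑ3 := by rw [hϑ3q]; positivity
  obtain ⟨E₂, E₃⟩ := coeff_relations_of_subordination (q := q) (by simp [abs_of_pos hq0, hq1.le])
    -- `(2 * 0 - 1 : ℕ) = 0`, so the constant coefficient of `F` is `a 0 / 0 = 0`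
    hb (by simp) (by simp [ha1]) hF hDqF hFne (hp 0 h0) hp0 (hw 0 h0) hw0 hsub
  have hp₁ : taylorCoeff p 1 = p1 := by rw [taylorCoeff_one, hp1]
  have hp₂ : taylorCoeff p 2 = p2 := by simp [taylorCoeff, hp2]
  have hϑ2c : (1 - (q : ℂ) ^ 2) / (1 - q) - 1 = ϑ2 := by rw [hϑ2]; push_cast; rfl
  have hϑ3c : (1 - (q : ℂ) ^ 3) / (1 - q) - 1 = ϑ3 := by rw [hϑ3]; push_cast; rfl
  rw [hp₁, hϑ2c] at E₂
  rw [hp₁, hp₂, hϑ3c] at E₃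
  have key := fekete_szego_identity (μ := μ) hϱ0 (by rw [hϑ2q]; exact_mod_cast hq0.ne')
    (by exact_mod_cast hϑ3pos.ne') hp1ne E₂ E₃
  norm_num [Nat.factorial] at key
  have hK : ‖10 * b * p1 / (ϱ * ϑ3)‖ = 10 * ‖b‖ * ‖p1‖ / (‖ϱ‖ * ϑ3) := by
    simp [abs_of_pos hϑ3pos]
  rw [show a 3 - μ * a 2 ^ 2 = 10 * (a 3 / 10) - 9 * μ * (-a 2 / 3) ^ 2 by ring, key, norm_mul, hK]
  gcongr
  exact norm_add_mul_sq_le_max <| norm_taylorCoeff_two_le hw.differentiableOn hw0 fun z hz ↦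
    mem_closedBall_zero_iff.mpr (hwb z hz).le

theorem starlike_fekete_szego_bound
    (q : ℝ) (hq0 : 0 < q) (hq1 : q < 1)
    (a : ℕ → ℂ) (ha0 : a 0 = 0) (ha1 : a 1 = 1)
    (f F DqF : ℂ → ℂ)
    (hf : ∀ z ∈ Metric.ball (0 : ℂ) 1, HasSum (fun n : ℕ => a n * z ^ n) (f z))
    (hF : ∀ z ∈ Metric.ball (0 : ℂ) 1,
      HasSum (fun n : ℕ =>
        (-1 : ℂ) ^ (n - 1) * a n / (((2 * n - 1 : ℕ) : ℂ) * ((n - 1).factorial : ℂ)) * z ^ n)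
        (F z))
    (hDq0 : DqF 0 = 1)
    (hDqF : ∀ z : ℂ, z ≠ 0 → DqF z = (F z - F ((q : ℂ) * z)) / ((1 - (q : ℂ)) * z))
    (ϑ2 ϑ3 : ℝ)
    (hϑ2 : ϑ2 = (1 - q ^ 2) / (1 - q) - 1)
    (hϑ3 : ϑ3 = (1 - q ^ 3) / (1 - q) - 1)
    (w : ℂ → ℂ)
    (hw : AnalyticOnNhd ℂ w (Metric.ball (0 : ℂ) 1))
    (hw0 : w 0 = 0)
    (hwb : ∀ z ∈ Metric.ball (0 : ℂ) 1, ‖w z‖ < 1)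
    (β : ℝ) (hβ1 : -(Real.pi / 2) < β) (hβ2 : β < Real.pi / 2)
    (ϱ : ℂ) (hϱ : ϱ = 1 + Complex.I * (Real.tan β : ℂ))
    (b : ℂ) (hb : b ≠ 0)
    (p : ℂ → ℂ)
    (hp : AnalyticOnNhd ℂ p (Metric.ball (0 : ℂ) 1))
    (hp0 : p 0 = 1)
    (p1 p2 : ℂ) (hp1 : p1 = deriv p 0) (hp2 : p2 = iteratedDeriv 2 p 0 / 2)
    (hFne : ∀ z ∈ Metric.ball (0 : ℂ) 1, z ≠ 0 → F z ≠ 0)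
    (hsub : ∀ z ∈ Metric.ball (0 : ℂ) 1, z ≠ 0 →
      1 + (1 / b) * (ϱ * (z * DqF z / F z) - ϱ) = p (w z))
    (hp1ne : p1 ≠ 0)
    :
    ∀ μ : ℂ, ‖a 3 - μ * (a 2) ^ 2‖ ≤
      (10 * ‖b‖ * ‖p1‖ / (‖ϱ‖ * ϑ3)) *
        max 1 (‖p2 / p1 +
          b * p1 * (10 * (ϑ2 : ℂ) - 9 * μ * (ϑ3 : ℂ)) / (10 * ϱ * (ϑ2 : ℂ) ^ 2)‖) :=
  starlike_fekete_szego_bound_general q hq0 hq1 a ha1 F DqF hF hDqF ϑ2 ϑ3 hϑ2 hϑ3 w hw hw0 hwb β ϱ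
    hϱ b hb p hp hp0 p1 p2 hp1 hp2 hFne hsub hp1ne
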